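/- arXiv:1201.0619 — 3 statements merged into one kernel-verified Lean document; each statement's English description precedes it below -/
import Mathlib

section
/- Let $X \subset \mathbb{R}^d$ be an open set, $k>0$, $q \colon X \to \mathbb{R}$, and let $u_1, u_j \in C^2(X,\mathbb{C})$ both satisfy the Helmholtz equation $\Delta u + (k^2 + ikq)u = 0$ in $X$, with $u_1(x) \ne 0$ and $q(x) \ne 0$ for all $x \in X$. Set $\alpha_j = u_j/u_1$, $E_1 = q|u_1|^2$, $\beta = \operatorname{Im}(\overline{u_1}\nabla u_1)$. Then for all $x \in X$: $\nabla \alpha_j \cdot \big(\nabla \log\tfrac{q}{E_1} - \tfrac{2iq\beta}{E_1}\big) = \Delta \alpha_j$. -/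
open scoped BigOperators

/-- If `u₁, uⱼ` both solve the Helmholtz equation `Δu + (k² + ikq)u = 0` in an open
set `X`, with `u₁ ≠ 0` and `q > 0` on `X`, then `α = uⱼ/u₁`, `E₁ = q|u₁|²` and
`β = Im(conj u₁ ∇u₁)` satisfy
`∇α ⋅ (∇ log (q/E₁) - 2iqβ/E₁) = Δα` on `X`, where
`∇ log (q/E₁) = ∇q/q - ∇E₁/E₁`. -/
theorem stmt_2 {d : ℕ} (X : Set (EuclideanSpace ℝ (Fin d))) (hX : IsOpen X)
    (k : ℝ) (hk : 0 < k) (q : EuclideanSpace ℝ (Fin d) → ℝ) (hq : ContDiff ℝ 1 q)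
    (u₁ uj : EuclideanSpace ℝ (Fin d) → ℂ)
    (hu₁ : ContDiff ℝ 2 u₁) (huj : ContDiff ℝ 2 uj)
    (hu₁0 : ∀ x ∈ X, u₁ x ≠ 0) (hq0 : ∀ x ∈ X, 0 < q x)
    (e : Fin d → EuclideanSpace ℝ (Fin d)) (he : ∀ i, e i = EuclideanSpace.single i 1)
    (hpde₁ : ∀ x ∈ X,
      (∑ i, fderiv ℝ (fun y => fderiv ℝ u₁ y (e i)) x (e i))
        + ((k ^ 2 : ℂ) + Complex.I * k * (q x : ℂ)) * u₁ x = 0)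
    (hpdej : ∀ x ∈ X,
      (∑ i, fderiv ℝ (fun y => fderiv ℝ uj y (e i)) x (e i))
        + ((k ^ 2 : ℂ) + Complex.I * k * (q x : ℂ)) * uj x = 0)
    (α : EuclideanSpace ℝ (Fin d) → ℂ) (hα : ∀ x, α x = uj x / u₁ x)
    (E₁ : EuclideanSpace ℝ (Fin d) → ℝ)
    (hE₁ : ∀ x, E₁ x = q x * ‖u₁ x‖ ^ 2)
    (β : EuclideanSpace ℝ (Fin d) → Fin d → ℝ)
    (hβ : ∀ x i, β x i = ((starRingEnd ℂ) (u₁ x) * fderiv ℝ u₁ x (e i)).im) :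
    ∀ x ∈ X,
      (∑ i, fderiv ℝ α x (e i) *
        (((fderiv ℝ q x (e i) / q x : ℝ) : ℂ) - ((fderiv ℝ E₁ x (e i) / E₁ x : ℝ) : ℂ)
          - 2 * Complex.I * (q x : ℂ) * (β x i : ℂ) / (E₁ x : ℂ)))
        = ∑ i, fderiv ℝ (fun y => fderiv ℝ α y (e i)) x (e i) := by
  intro x hx
  have hu₁d : Differentiable ℝ u₁ := hu₁.differentiable two_ne_zero
  have hqd : Differentiable ℝ q := hq.differentiable one_ne_zero
  have hu₁x : u₁ x ≠ 0 := hu₁0 x hx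
  have hqx : q x ≠ 0 := (hq0 x hx).ne'
  have hαfun : α = fun z => uj z * (u₁ z)⁻¹ := funext fun z => by
    rw [hα, div_eq_mul_inv]
  have hαC2 : ∀ y ∈ X, ContDiffAt ℝ 2 α y := by
    intro y hy
    rw [hαfun]
    exact huj.contDiffAt.mul (hu₁.contDiffAt.inv (hu₁0 y hy))
  have hαd : ∀ y ∈ X, DifferentiableAt ℝ α y := fun y hy =>
    (hαC2 y hy).differentiableAt two_ne_zero
  have hmulpt : ∀ y ∈ X, uj y = α y * u₁ y := by
    intro y hy
    rw [hα, div_mul_cancel₀ _ (hu₁0 y hy)]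
  -- first derivative product rule on X
  have hD1 : ∀ y ∈ X, fderiv ℝ uj y = α y • fderiv ℝ u₁ y + u₁ y • fderiv ℝ α y := by
    intro y hy
    have hev : uj =ᶠ[nhds y] fun z => α z * u₁ z :=
      Filter.eventually_of_mem (hX.mem_nhds hy) fun z hz => hmulpt z hz
    rw [hev.fderiv_eq, fderiv_fun_mul (hαd y hy) (hu₁d y)]
  -- second derivative product rule at x, per direction
  have key : ∀ i, fderiv ℝ (fun y => fderiv ℝ uj y (e i)) x (e i)
      = α x * fderiv ℝ (fun y => fderiv ℝ u₁ y (e i)) x (e i)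
        + u₁ x * fderiv ℝ (fun y => fderiv ℝ α y (e i)) x (e i)
        + 2 * (fderiv ℝ α x (e i) * fderiv ℝ u₁ x (e i)) := by
    intro i
    have hFu₁ : ContDiff ℝ 1 fun y => fderiv ℝ u₁ y (e i) :=
      (hu₁.fderiv_right (by norm_num)).clm_apply contDiff_const
    have hFu₁d : DifferentiableAt ℝ (fun y => fderiv ℝ u₁ y (e i)) x :=
      (hFu₁.differentiable one_ne_zero) x
    have hFα : ContDiffAt ℝ 1 (fun y => fderiv ℝ α y (e i)) x :=
      ((hαC2 x hx).fderiv_right (by norm_num)).clm_apply contDiffAt_const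
    have hFαd : DifferentiableAt ℝ (fun y => fderiv ℝ α y (e i)) x :=
      hFα.differentiableAt one_ne_zero
    have hev2 : (fun y => fderiv ℝ uj y (e i)) =ᶠ[nhds x]
        fun y => α y * fderiv ℝ u₁ y (e i) + u₁ y * fderiv ℝ α y (e i) :=
      Filter.eventually_of_mem (hX.mem_nhds hx) fun y hy => by
        simp only [hD1 y hy, ContinuousLinearMap.add_apply,
          ContinuousLinearMap.smul_apply, smul_eq_mul]
    have h1 : DifferentiableAt ℝ (fun y => α y * fderiv ℝ u₁ y (e i)) x :=
      (hαd x hx).mul hFu₁d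
    have h2 : DifferentiableAt ℝ (fun y => u₁ y * fderiv ℝ α y (e i)) x :=
      (hu₁d x).mul hFαd
    rw [hev2.fderiv_eq, fderiv_fun_add h1 h2, fderiv_fun_mul (hαd x hx) hFu₁d,
      fderiv_fun_mul (hu₁d x) hFαd]
    simp only [ContinuousLinearMap.add_apply, ContinuousLinearMap.smul_apply, smul_eq_mul]
    ring
  -- sums
  set S1 := ∑ i, fderiv ℝ (fun y => fderiv ℝ u₁ y (e i)) x (e i) with hS1
  set S2 := ∑ i, fderiv ℝ (fun y => fderiv ℝ α y (e i)) x (e i) with hS2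
  set S3 := ∑ i, fderiv ℝ α x (e i) * fderiv ℝ u₁ x (e i) with hS3
  set c := ((k ^ 2 : ℂ) + Complex.I * k * (q x : ℂ)) with hc
  have e1 : S1 + c * u₁ x = 0 := hpde₁ x hx
  have e2 : (α x * S1 + u₁ x * S2 + 2 * S3) + c * (α x * u₁ x) = 0 := by
    have := hpdej x hx
    rw [hmulpt x hx] at this
    rw [← this]
    congr 1
    rw [hS1, hS2, hS3, Finset.mul_sum, Finset.mul_sum, Finset.mul_sum,
      ← Finset.sum_add_distrib, ← Finset.sum_add_distrib]
    exact Finset.sum_congr rfl fun i _ => (key i).symm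
  have hkey2 : u₁ x * S2 = -2 * S3 := by linear_combination e2 - α x * e1
  -- coefficient computation
  have coef : ∀ i, ((fderiv ℝ q x (e i) / q x : ℝ) : ℂ)
      - ((fderiv ℝ E₁ x (e i) / E₁ x : ℝ) : ℂ)
      - 2 * Complex.I * (q x : ℂ) * (β x i : ℂ) / (E₁ x : ℂ)
      = -2 * fderiv ℝ u₁ x (e i) / u₁ x := by
    intro i
    set a := u₁ x with haa
    set b := fderiv ℝ u₁ x (e i) with hbb
    set n := a.re * a.re + a.im * a.im with hnn
    have hnpos : (0 : ℝ) < n := by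
      have := Complex.normSq_pos.mpr hu₁x
      rwa [Complex.normSq_apply] at this
    have hn0 : n ≠ 0 := hnpos.ne'
    -- derivative of E₁
    have hre : HasFDerivAt (fun y => (u₁ y).re) (Complex.reCLM.comp (fderiv ℝ u₁ x)) x :=
      Complex.reCLM.hasFDerivAt.comp x (hu₁d x).hasFDerivAt
    have him : HasFDerivAt (fun y => (u₁ y).im) (Complex.imCLM.comp (fderiv ℝ u₁ x)) x :=
      Complex.imCLM.hasFDerivAt.comp x (hu₁d x).hasFDerivAt
    have hg := (hre.mul hre).add (him.mul him)
    have hEfun : E₁ = fun y => q y * ((u₁ y).re * (u₁ y).re + (u₁ y).im * (u₁ y).im) :=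
      funext fun y => by rw [hE₁, Complex.sq_norm, Complex.normSq_apply]
    have hE' := (hqd x).hasFDerivAt.mul hg
    have hDE : fderiv ℝ E₁ x (e i)
        = q x * (a.re * b.re + a.re * b.re + (a.im * b.im + a.im * b.im))
          + n * fderiv ℝ q x (e i) := by
      rw [hEfun, show (fun y => q y * ((u₁ y).re * (u₁ y).re + (u₁ y).im * (u₁ y).im)) = q * (((fun y => (u₁ y).re) * fun y => (u₁ y).re) + (fun y => (u₁ y).im) * fun y => (u₁ y).im) from rfl, hE'.fderiv]
      simp [smul_eq_mul]
      ring
    have hE₁x : E₁ x = q x * n := by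
      rw [hE₁, Complex.sq_norm, Complex.normSq_apply]
    have hβi : β x i = a.re * b.im - a.im * b.re := by
      rw [hβ]
      simp [Complex.mul_im]
      ring
    -- right hand side
    have hconj : (starRingEnd ℂ) a * b
        = ((a.re * b.re + a.im * b.im : ℝ) : ℂ)
          + ((a.re * b.im - a.im * b.re : ℝ) : ℂ) * Complex.I := by
      apply Complex.ext <;> simp [Complex.mul_re, Complex.mul_im] <;> ring
    have hn_eq : ((n : ℝ) : ℂ) = a * (starRingEnd ℂ) a := by
      rw [Complex.mul_conj, Complex.normSq_apply]
    have hrhs : -2 * b / a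
        = (-2 * (((a.re * b.re + a.im * b.im : ℝ) : ℂ)
            + ((a.re * b.im - a.im * b.re : ℝ) : ℂ) * Complex.I)) / ((n : ℝ) : ℂ) := by
      rw [← hconj, hn_eq, div_eq_div_iff hu₁x
        (mul_ne_zero hu₁x (by simpa using hu₁x))]
      ring
    rw [hrhs, hDE, hE₁x, hβi]
    have hqx' : ((q x : ℝ) : ℂ) ≠ 0 := Complex.ofReal_ne_zero.mpr hqx
    have hn' : ((n : ℝ) : ℂ) ≠ 0 := Complex.ofReal_ne_zero.mpr hn0
    push_cast
    field_simp
    ring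
  -- conclude
  calc (∑ i, fderiv ℝ α x (e i) *
        (((fderiv ℝ q x (e i) / q x : ℝ) : ℂ) - ((fderiv ℝ E₁ x (e i) / E₁ x : ℝ) : ℂ)
          - 2 * Complex.I * (q x : ℂ) * (β x i : ℂ) / (E₁ x : ℂ)))
      = ∑ i, fderiv ℝ α x (e i) * (-2 * fderiv ℝ u₁ x (e i) / u₁ x) :=
        Finset.sum_congr rfl fun i _ => by rw [coef i]
    _ = (-2 * S3) / u₁ x := by
        rw [hS3, Finset.mul_sum, Finset.sum_div]
        exact Finset.sum_congr rfl fun i _ => by ring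
    _ = S2 := by rw [← hkey2, mul_div_cancel_left₀ _ hu₁x]
end

section
/- Let $H$ be a complex Hilbert space ($H = L^2(X)$), let $u \in L^\infty(X)$ with $m := \inf_X |u| > 0$, let $q \in L^\infty(X)$ real-valued, and suppose $v \colon L^2(X) \to L^2(X)$ is a linear map satisfying $\|v(\rho)\|_{L^2} \le \eta \|\rho u\|_{L^2}$ for all $\rho$, for some $\eta > 0$ with $4\eta\|q\|_{L^\infty} < 1$. Define $T(\rho) = \rho |u|^2 + 2 q \operatorname{Re}(u \overline{v(\rho)})$. Then for all real-valued $\rho \in L^2(X)$: $\|T(\rho)\|_{L^2}^2 \geq m^4 (1 - 4\eta \|q\|_{L^\infty}) \|\rho\|_{L^2}^2$. -/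
open MeasureTheory

private lemma sq_add_le_aux (a b A B : ℝ) (ha : |a| ≤ A) (hb : |b| ≤ B) :
    (a + b) ^ 2 ≤ 2 * A ^ 2 + 2 * B ^ 2 := by
  have h1 : a ^ 2 ≤ A ^ 2 := by
    have := mul_self_le_mul_self (abs_nonneg a) ha
    nlinarith [sq_abs a]
  have h2 : b ^ 2 ≤ B ^ 2 := by
    have := mul_self_le_mul_self (abs_nonneg b) hb
    nlinarith [sq_abs b]
  nlinarith [sq_nonneg (a - b)]

set_option maxHeartbeats 1000000 in
/-- Coercivity of the (abstracted) Fréchet derivative of the thermo-acoustic data map: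
with `T(ρ) = ρ|u|² + 2q Re(u conj(v ρ))`, `inf|u| = m > 0`, `‖q‖_∞ ≤ Q`,
and `‖v(ρ)‖_{L²} ≤ η ‖ρ u‖_{L²}` with `4ηQ < 1`, one has
`‖T(ρ)‖_{L²}² ≥ m⁴ (1 - 4ηQ) ‖ρ‖_{L²}²`. -/
theorem stmt_8 {α : Type*} [MeasurableSpace α] (μ : Measure α)
    (u : α → ℂ) (q : α → ℝ) (m Mu Q η : ℝ)
    (hm : 0 < m) (hlb : ∀ x, m ≤ ‖u x‖) (hub : ∀ x, ‖u x‖ ≤ Mu)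
    (hQ : ∀ x, |q x| ≤ Q) (hη : 0 < η) (hηQ : 4 * η * Q < 1)
    (humeas : AEStronglyMeasurable u μ) (hqmeas : AEStronglyMeasurable q μ)
    (v : (α → ℝ) → α → ℂ) (hlin : IsLinearMap ℝ v)
    (hvmeas : ∀ ρ, AEStronglyMeasurable (v ρ) μ)
    (hv : ∀ ρ : α → ℝ, Real.sqrt (∫ x, ‖v ρ x‖ ^ 2 ∂μ)
      ≤ η * Real.sqrt (∫ x, ‖(ρ x : ℂ) * u x‖ ^ 2 ∂μ))
    (T : (α → ℝ) → α → ℝ)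
    (hT : ∀ ρ x, T ρ x = ρ x * ‖u x‖ ^ 2
      + 2 * q x * (u x * (starRingEnd ℂ) (v ρ x)).re) :
    ∀ ρ : α → ℝ, MemLp ρ 2 μ → MemLp (v ρ) 2 μ →
      ∫ x, (T ρ x) ^ 2 ∂μ ≥ m ^ 4 * (1 - 4 * η * Q) * ∫ x, (ρ x) ^ 2 ∂μ := by
  intro ρ hρ hvρ
  rcases isEmpty_or_nonempty α with hE | ⟨⟨x0⟩⟩
  · have hμ : μ = 0 := Subsingleton.elim μ 0
    simp [hμ]
  have hQ0 : 0 ≤ Q := le_trans (abs_nonneg _) (hQ x0)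
  have hMu0 : 0 ≤ Mu := le_trans (le_trans hm.le (hlb x0)) (hub x0)
  set f : α → ℝ := fun x => ‖ρ x‖ * ‖u x‖ with hfdef
  set g : α → ℝ := fun x => ‖v ρ x‖ with hgdef
  have hfmeas : AEStronglyMeasurable f μ := hρ.aestronglyMeasurable.norm.mul humeas.norm
  have hfnn : ∀ x, 0 ≤ f x := fun x => mul_nonneg (norm_nonneg _) (norm_nonneg _)
  have hgnn : ∀ x, 0 ≤ g x := fun x => norm_nonneg _
  have hfmem : MemLp f 2 μ := by
    refine MemLp.of_le (hρ.const_mul Mu) hfmeas (Filter.Eventually.of_forall fun x => ?_)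
    have h1 : ‖f x‖ = f x := Real.norm_of_nonneg (hfnn x)
    have h2 : ‖ρ x‖ * ‖u x‖ ≤ Mu * ‖ρ x‖ := by
      rw [mul_comm]
      exact mul_le_mul_of_nonneg_right (hub x) (norm_nonneg _)
    calc ‖f x‖ = ‖ρ x‖ * ‖u x‖ := h1
      _ ≤ Mu * ‖ρ x‖ := h2
      _ ≤ |Mu * ρ x| := by rw [abs_mul, abs_of_nonneg hMu0]; exact le_of_eq rfl
      _ = ‖Mu * ρ x‖ := (Real.norm_eq_abs _).symm
  have hgmem : MemLp g 2 μ := hvρ.norm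
  have hf2 : Integrable (fun x => f x ^ 2) μ := hfmem.integrable_sq
  have hg2 : Integrable (fun x => g x ^ 2) μ := hgmem.integrable_sq
  have hρ2 : Integrable (fun x => ρ x ^ 2) μ := hρ.integrable_sq
  -- integrability of the product f*g
  have hfgmeas : AEStronglyMeasurable (fun x => f x * g x) μ :=
    hfmeas.mul (hvmeas ρ).norm
  have hfg : Integrable (fun x => f x * g x) μ := by
    refine Integrable.mono' (hf2.add hg2) hfgmeas (Filter.Eventually.of_forall fun x => ?_)
    have h1 : ‖f x * g x‖ = f x * g x :=
      Real.norm_of_nonneg (mul_nonneg (hfnn x) (hgnn x))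
    rw [h1]
    simp only [Pi.add_apply]
    nlinarith [sq_nonneg (f x - g x)]
  set A := ∫ x, f x ^ 2 ∂μ with hAdef
  set B := ∫ x, g x ^ 2 ∂μ with hBdef
  have hA0 : 0 ≤ A := integral_nonneg fun x => sq_nonneg _
  -- the given bound: √B ≤ η √A
  have hvbound : Real.sqrt B ≤ η * Real.sqrt A := by
    have h := hv ρ
    have heq : (∫ x, ‖(ρ x : ℂ) * u x‖ ^ 2 ∂μ) = A := by
      refine integral_congr_ae (Filter.Eventually.of_forall fun x => ?_)
      simp [hfdef, norm_mul, Complex.norm_real, mul_pow]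
    rw [heq] at h
    exact h
  -- Cauchy–Schwarz : ∫ f g ≤ √A √B
  have hpq : Real.HolderConjugate 2 2 := Real.holderConjugate_iff.mpr ⟨one_lt_two, by norm_num⟩
  have hCS : ∫ x, f x * g x ∂μ ≤ Real.sqrt A * Real.sqrt B := by
    have h2 : (ENNReal.ofReal (2 : ℝ)) = 2 := by norm_num
    have := integral_mul_le_Lp_mul_Lq_of_nonneg hpq
      (Filter.Eventually.of_forall hfnn) (Filter.Eventually.of_forall hgnn)
      (h2 ▸ hfmem) (h2 ▸ hgmem)
    have hf' : (∫ x, f x ^ (2 : ℝ) ∂μ) = A := by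
      refine integral_congr_ae (Filter.Eventually.of_forall fun x => ?_)
      exact Real.rpow_two (f x)
    have hg' : (∫ x, g x ^ (2 : ℝ) ∂μ) = B := by
      refine integral_congr_ae (Filter.Eventually.of_forall fun x => ?_)
      exact Real.rpow_two (g x)
    rw [hf', hg'] at this
    rw [Real.sqrt_eq_rpow, Real.sqrt_eq_rpow]
    exact this
  -- pointwise key inequality
  have key : ∀ x, m ^ 2 * (f x ^ 2 - 4 * Q * (f x * g x)) ≤ T ρ x ^ 2 := by
    intro x
    have hs : m ^ 2 ≤ ‖u x‖ ^ 2 := by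
      have := hlb x
      nlinarith
    have hr : |(u x * (starRingEnd ℂ) (v ρ x)).re| ≤ ‖u x‖ * g x := by
      calc |(u x * (starRingEnd ℂ) (v ρ x)).re| ≤ ‖u x * (starRingEnd ℂ) (v ρ x)‖ := by
            exact Complex.abs_re_le_norm _
        _ = ‖u x‖ * g x := by rw [norm_mul, RingHomIsometric.norm_map]
    set a := ρ x
    set s := ‖u x‖ ^ 2
    set r := (u x * (starRingEnd ℂ) (v ρ x)).re
    have hf2x : f x ^ 2 = a ^ 2 * s := by
      simp [hfdef, mul_pow, Real.norm_eq_abs, sq_abs, s, a]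
    have hfgx : f x * g x = |a| * (‖u x‖ * g x) := by
      simp [hfdef, Real.norm_eq_abs, mul_assoc, a]
    have hTx : T ρ x = a * s + 2 * q x * r := hT ρ x
    -- claim1 : a²s - 4Q f g ≤ a²s + 4 q a r
    have hqar : |q x * (a * r)| ≤ Q * (|a| * (‖u x‖ * g x)) := by
      rw [abs_mul, abs_mul]
      have h1 : |q x| ≤ Q := hQ x
      have h2 : |r| ≤ ‖u x‖ * g x := hr
      have := mul_le_mul h1 (mul_le_mul_of_nonneg_left h2 (abs_nonneg a))
        (mul_nonneg (abs_nonneg a) (abs_nonneg r)) hQ0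
      exact this
    have claim1 : f x ^ 2 - 4 * Q * (f x * g x) ≤ a ^ 2 * s + 4 * (q x * (a * r)) := by
      rw [hf2x, hfgx]
      have := neg_abs_le (q x * (a * r))
      have h := hqar
      nlinarith
    have claim2 : s * (a ^ 2 * s + 4 * (q x * (a * r))) ≤ (a * s + 2 * q x * r) ^ 2 := by
      nlinarith [sq_nonneg (q x * r), sq_nonneg (a * s + 2 * q x * r)]
    have hs0 : (0 : ℝ) ≤ s := sq_nonneg _
    have hm2 : (0 : ℝ) ≤ m ^ 2 := sq_nonneg _
    rcases le_or_gt (a ^ 2 * s + 4 * (q x * (a * r))) 0 with h | h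
    · have h1 : m ^ 2 * (f x ^ 2 - 4 * Q * (f x * g x)) ≤ m ^ 2 * (a ^ 2 * s + 4 * (q x * (a * r))) :=
        mul_le_mul_of_nonneg_left claim1 hm2
      have h2 : m ^ 2 * (a ^ 2 * s + 4 * (q x * (a * r))) ≤ 0 :=
        mul_nonpos_of_nonneg_of_nonpos hm2 h
      have h3 : (0 : ℝ) ≤ T ρ x ^ 2 := sq_nonneg _
      linarith
    · have h1 : m ^ 2 * (f x ^ 2 - 4 * Q * (f x * g x)) ≤ m ^ 2 * (a ^ 2 * s + 4 * (q x * (a * r))) :=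
        mul_le_mul_of_nonneg_left claim1 hm2
      have h2 : m ^ 2 * (a ^ 2 * s + 4 * (q x * (a * r))) ≤ s * (a ^ 2 * s + 4 * (q x * (a * r))) :=
        mul_le_mul_of_nonneg_right hs h.le
      rw [hTx]
      linarith
  -- integrability of T²
  have hTmeas : AEStronglyMeasurable (T ρ) μ := by
    have : T ρ = fun x => ρ x * ‖u x‖ ^ 2 + 2 * q x * (u x * (starRingEnd ℂ) (v ρ x)).re :=
      funext (hT ρ)
    rw [this]
    have h1 : AEStronglyMeasurable (fun x => ρ x * ‖u x‖ ^ 2) μ :=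
      hρ.aestronglyMeasurable.mul
        ((continuous_pow 2).comp_aestronglyMeasurable humeas.norm)
    have hconj : AEStronglyMeasurable (fun x => (starRingEnd ℂ) (v ρ x)) μ :=
      Complex.continuous_conj.comp_aestronglyMeasurable (hvmeas ρ)
    have h2 : AEStronglyMeasurable (fun x => (u x * (starRingEnd ℂ) (v ρ x)).re) μ :=
      Complex.continuous_re.comp_aestronglyMeasurable (humeas.mul hconj)
    exact h1.add ((hqmeas.const_mul 2).mul h2)
  have hT2 : Integrable (fun x => T ρ x ^ 2) μ := by
    refine Integrable.mono' (((hρ2.const_mul (2 * (Mu ^ 2) ^ 2))).add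
      (hg2.const_mul (2 * (2 * Q * Mu) ^ 2)))
      ((continuous_pow 2).comp_aestronglyMeasurable hTmeas)
      (Filter.Eventually.of_forall fun x => ?_)
    have ha : |ρ x * ‖u x‖ ^ 2| ≤ Mu ^ 2 * |ρ x| := by
      rw [abs_mul, mul_comm]
      have h1 : |(‖u x‖ ^ 2 : ℝ)| = ‖u x‖ ^ 2 := abs_of_nonneg (sq_nonneg _)
      rw [h1]
      exact mul_le_mul_of_nonneg_right (by nlinarith [hlb x, hub x, hm]) (abs_nonneg _)
    have hb : |2 * q x * (u x * (starRingEnd ℂ) (v ρ x)).re| ≤ 2 * Q * Mu * g x := by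
      have hr : |(u x * (starRingEnd ℂ) (v ρ x)).re| ≤ Mu * g x := by
        calc |(u x * (starRingEnd ℂ) (v ρ x)).re| ≤ ‖u x * (starRingEnd ℂ) (v ρ x)‖ := by
              exact Complex.abs_re_le_norm _
          _ = ‖u x‖ * g x := by rw [norm_mul, RingHomIsometric.norm_map]
          _ ≤ Mu * g x := mul_le_mul_of_nonneg_right (hub x) (hgnn x)
      rw [abs_mul, abs_mul]
      have h2 : |(2 : ℝ)| = 2 := by norm_num
      rw [h2]
      calc 2 * |q x| * |(u x * (starRingEnd ℂ) (v ρ x)).re| ≤ 2 * Q * (Mu * g x) := by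
            have := mul_le_mul (mul_le_mul_of_nonneg_left (hQ x) (by norm_num : (0:ℝ) ≤ 2)) hr
              (abs_nonneg _) (by positivity)
            linarith
        _ = 2 * Q * Mu * g x := by ring
    have hT2x : ‖T ρ x ^ 2‖ = T ρ x ^ 2 := Real.norm_of_nonneg (sq_nonneg _)
    rw [hT2x, hT ρ x]
    have := sq_add_le_aux (ρ x * ‖u x‖ ^ 2) (2 * q x * (u x * (starRingEnd ℂ) (v ρ x)).re)
      (Mu ^ 2 * |ρ x|) (2 * Q * Mu * g x) ha hb
    have hga : (Mu ^ 2 * |ρ x|) ^ 2 = (Mu ^ 2) ^ 2 * ρ x ^ 2 := by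
      rw [mul_pow, sq_abs]
    have hgb : (2 * Q * Mu * g x) ^ 2 = (2 * Q * Mu) ^ 2 * g x ^ 2 := by ring
    calc (ρ x * ‖u x‖ ^ 2 + 2 * q x * (u x * (starRingEnd ℂ) (v ρ x)).re) ^ 2
        ≤ 2 * (Mu ^ 2 * |ρ x|) ^ 2 + 2 * (2 * Q * Mu * g x) ^ 2 := this
      _ = 2 * (Mu ^ 2) ^ 2 * ρ x ^ 2 + 2 * (2 * Q * Mu) ^ 2 * g x ^ 2 := by
          rw [hga, hgb]; ring
  -- integrate the key inequality
  have hWint : Integrable (fun x => m ^ 2 * (f x ^ 2 - 4 * Q * (f x * g x))) μ :=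
    ((hf2.sub (hfg.const_mul (4 * Q))).const_mul (m ^ 2))
  have hstep1 : ∫ x, m ^ 2 * (f x ^ 2 - 4 * Q * (f x * g x)) ∂μ ≤ ∫ x, T ρ x ^ 2 ∂μ :=
    integral_mono hWint hT2 key
  have hstep2 : ∫ x, m ^ 2 * (f x ^ 2 - 4 * Q * (f x * g x)) ∂μ
      = m ^ 2 * (A - 4 * Q * ∫ x, f x * g x ∂μ) := by
    rw [integral_const_mul, integral_sub hf2 (hfg.const_mul (4 * Q)), integral_const_mul]
  have hsqAB : Real.sqrt A * Real.sqrt B ≤ η * A := by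
    calc Real.sqrt A * Real.sqrt B ≤ Real.sqrt A * (η * Real.sqrt A) :=
          mul_le_mul_of_nonneg_left hvbound (Real.sqrt_nonneg _)
      _ = η * (Real.sqrt A * Real.sqrt A) := by ring
      _ = η * A := by rw [Real.mul_self_sqrt hA0]
  have hfgA : ∫ x, f x * g x ∂μ ≤ η * A := le_trans hCS hsqAB
  have hAlow : m ^ 2 * ∫ x, ρ x ^ 2 ∂μ ≤ A := by
    rw [← integral_const_mul]
    refine integral_mono (hρ2.const_mul _) hf2 fun x => ?_
    have hs : m ^ 2 ≤ ‖u x‖ ^ 2 := by nlinarith [hlb x, hm]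
    have : f x ^ 2 = ρ x ^ 2 * ‖u x‖ ^ 2 := by
      simp [hfdef, mul_pow, Real.norm_eq_abs, sq_abs]
    rw [this]
    nlinarith [sq_nonneg (ρ x)]
  have hρ2nn : 0 ≤ ∫ x, ρ x ^ 2 ∂μ := integral_nonneg fun x => sq_nonneg _
  have hc : 0 < 1 - 4 * η * Q := by linarith
  have hm2 : (0 : ℝ) ≤ m ^ 2 := sq_nonneg _
  have hmain : m ^ 2 * ((1 - 4 * η * Q) * A) ≤ ∫ x, T ρ x ^ 2 ∂μ := by
    have h1 : (1 - 4 * η * Q) * A ≤ A - 4 * Q * ∫ x, f x * g x ∂μ := by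
      have : 4 * Q * ∫ x, f x * g x ∂μ ≤ 4 * Q * (η * A) :=
        mul_le_mul_of_nonneg_left hfgA (by positivity)
      nlinarith
    calc m ^ 2 * ((1 - 4 * η * Q) * A) ≤ m ^ 2 * (A - 4 * Q * ∫ x, f x * g x ∂μ) :=
          mul_le_mul_of_nonneg_left h1 hm2
      _ = ∫ x, m ^ 2 * (f x ^ 2 - 4 * Q * (f x * g x)) ∂μ := hstep2.symm
      _ ≤ ∫ x, T ρ x ^ 2 ∂μ := hstep1
  have hfinal : m ^ 4 * (1 - 4 * η * Q) * ∫ x, ρ x ^ 2 ∂μ ≤ m ^ 2 * ((1 - 4 * η * Q) * A) := by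
    have h1 : (1 - 4 * η * Q) * (m ^ 2 * ∫ x, ρ x ^ 2 ∂μ) ≤ (1 - 4 * η * Q) * A :=
      mul_le_mul_of_nonneg_left hAlow hc.le
    nlinarith
  exact le_trans hfinal hmain
end

section
/- Let $E_1 \colon X \to (0,\infty)$ be differentiable, $a \colon X \to \mathbb{C}^d$ differentiable, $q \colon X \to (0,\infty)$ differentiable, $k > 0$, and $\beta \colon X \to \mathbb{R}^d$ differentiable. Assume: (i) $\nabla q / q - \nabla E_1/E_1 = \operatorname{Re}(a)$; (ii) $\beta = -\frac{E_1 \operatorname{Im}(a)}{2q}$; (iii) $-\operatorname{div}\beta = k E_1$. Then $q = \frac{-\operatorname{Re}(a)\cdot\operatorname{Im}(a) + \operatorname{div}\operatorname{Im}(a)}{2k}$ on $X$. -/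
open scoped BigOperators

/-- The algebraic core of the exact reconstruction formula: if
`∇q/q - ∇E₁/E₁ = Re a`, `β = -E₁ Im a/(2q)` and `-div β = k E₁` on an open set
`X`, then `q = (-Re a ⋅ Im a + div Im a)/(2k)` on `X`. -/
theorem stmt_17 {d : ℕ} (X : Set (EuclideanSpace ℝ (Fin d))) (hX : IsOpen X)
    (k : ℝ) (hk : 0 < k)
    (q E₁ : EuclideanSpace ℝ (Fin d) → ℝ)
    (a : EuclideanSpace ℝ (Fin d) → Fin d → ℂ)
    (β : EuclideanSpace ℝ (Fin d) → Fin d → ℝ)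
    (hqdiff : Differentiable ℝ q) (hE₁diff : Differentiable ℝ E₁)
    (hadiff : ∀ j, Differentiable ℝ (fun y => (a y j).im))
    (hβdiff : ∀ j, Differentiable ℝ (fun y => β y j))
    (hqpos : ∀ x ∈ X, 0 < q x) (hE₁pos : ∀ x ∈ X, 0 < E₁ x)
    (e : Fin d → EuclideanSpace ℝ (Fin d)) (he : ∀ i, e i = EuclideanSpace.single i 1)
    (hi : ∀ x ∈ X, ∀ j, fderiv ℝ q x (e j) / q x - fderiv ℝ E₁ x (e j) / E₁ x
      = (a x j).re)
    (hii : ∀ x ∈ X, ∀ j, β x j = -(E₁ x * (a x j).im) / (2 * q x))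
    (hiii : ∀ x ∈ X, -(∑ j, fderiv ℝ (fun y => β y j) x (e j)) = k * E₁ x) :
    ∀ x ∈ X, q x = (-(∑ j, (a x j).re * (a x j).im)
        + ∑ j, fderiv ℝ (fun y => (a y j).im) x (e j)) / (2 * k) := by
  intro x hx
  have hq0 : q x ≠ 0 := (hqpos x hx).ne'
  have hE0 : E₁ x ≠ 0 := (hE₁pos x hx).ne'
  have h2q0 : (2 : ℝ) * q x ≠ 0 := by positivity
  -- value of div β at x
  have key : ∀ j, fderiv ℝ (fun y => β y j) x (e j)
      = E₁ x * ((a x j).re * (a x j).im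
          - fderiv ℝ (fun y => (a y j).im) x (e j)) / (2 * q x) := by
    intro j
    -- β j agrees with the explicit formula near x
    have heq : (fun y => β y j) =ᶠ[nhds x]
        (fun y => -(E₁ y * (a y j).im) * ((2 * q y))⁻¹) := by
      filter_upwards [hX.mem_nhds hx] with y hy
      rw [hii y hy j, div_eq_mul_inv]
    rw [Filter.EventuallyEq.fderiv_eq heq]
    have hgdiff : DifferentiableAt ℝ (fun y => -(E₁ y * (a y j).im)) x :=
      ((hE₁diff x).mul ((hadiff j) x)).neg
    have hhdiff : DifferentiableAt ℝ (fun y => 2 * q y) x :=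
      (hqdiff x).const_mul 2
    have hinvdiff : DifferentiableAt ℝ (fun y => ((2 * q y))⁻¹) x :=
      hhdiff.inv h2q0
    rw [fderiv_fun_mul hgdiff hinvdiff]
    have hinv : fderiv ℝ (fun y => ((2 * q y))⁻¹) x
        = (fderiv ℝ (fun t : ℝ => t⁻¹) (2 * q x)).comp (fderiv ℝ (fun y => 2 * q y) x) := by
      exact fderiv_comp x (differentiableAt_inv h2q0) hhdiff
    have hg : fderiv ℝ (fun y => -(E₁ y * (a y j).im)) x
        = -(E₁ x • fderiv ℝ (fun y => (a y j).im) x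
            + (a x j).im • fderiv ℝ E₁ x) := by
      rw [fderiv_fun_neg, fderiv_fun_mul (hE₁diff x) ((hadiff j) x)]
    have hh : fderiv ℝ (fun y => 2 * q y) x = (2 : ℝ) • fderiv ℝ q x :=
      fderiv_const_mul (hqdiff x) 2
    have hDE := hi x hx j
    have hDE' : fderiv ℝ E₁ x (e j) * q x
        = fderiv ℝ q x (e j) * E₁ x - (a x j).re * q x * E₁ x := by
      field_simp at hDE
      linarith [hDE]
    simp only [ContinuousLinearMap.add_apply, ContinuousLinearMap.smul_apply,
      ContinuousLinearMap.coe_comp', Function.comp_apply, hinv, hg, hh,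
      fderiv_inv, ContinuousLinearMap.smulRight_apply, ContinuousLinearMap.one_apply,
      ContinuousLinearMap.neg_apply, smul_eq_mul, ContinuousLinearMap.toSpanSingleton_apply]
    field_simp
    linear_combination (-(a x j).im) * hDE'
  have hsum : -(∑ j, fderiv ℝ (fun y => β y j) x (e j))
      = E₁ x * ((∑ j, fderiv ℝ (fun y => (a y j).im) x (e j))
          - ∑ j, (a x j).re * (a x j).im) / (2 * q x) := by
    simp only [key]
    rw [← Finset.sum_div, ← Finset.mul_sum, ← Finset.sum_sub_distrib]
    field_simp
    rw [← Finset.sum_neg_distrib]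
    exact Finset.sum_congr rfl fun _ _ => by ring
  rw [hiii x hx] at hsum
  have h2 : E₁ x * (2 * k * q x)
      = E₁ x * ((∑ j, fderiv ℝ (fun y => (a y j).im) x (e j))
          - ∑ j, (a x j).re * (a x j).im) := by
    field_simp at hsum
    rw [← hsum]; ring
  have : (∑ j, fderiv ℝ (fun y => (a y j).im) x (e j))
      - ∑ j, (a x j).re * (a x j).im = 2 * k * q x :=
    (mul_left_cancel₀ hE0 h2).symm
  field_simp
  linarith [this]
end
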